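/- Let v : ℝ → ℝ be six times continuously differentiable and x₀ ∈ ℝ. For h > 0 define the cell averages v̄_j(h) = (1/h)∫_{x₀+(j−1/2)h}^{x₀+(j+1/2)h} v(t) dt for j = −1, 0, 1, and the smoothness indicator β₁(h) = (13/12)(v̄₋₁ − 2v̄₀ + v̄₁)² + (1/4)(v̄₋₁ − v̄₁)². Then β₁(h) − [v′(x₀)²h² + ((13/12)v″(x₀)² + (5/12)v′(x₀)v‴(x₀))h⁴] is O(h⁶) as h → 0⁺. -/

import Mathlib

/-!
With `P y = ∫ t in x₀..y, v t` we have `h v̄ⱼ = P (x₀ + (j + 1/2) h) - P (x₀ + (j - 1/2) h)`, so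
`h` times each of the two differences squared in `β₁` is a four-point stencil applied to `P`.
Taylor-expanding `P` about `x₀`, the stencil moments `∑ wᵢ cᵢᵏ` give
`v̄₋₁ - 2 v̄₀ + v̄₁ = v''(x₀) h² + O(h⁴)` and `v̄₋₁ - v̄₁ = -2 v'(x₀) h - (5/12) v'''(x₀) h³ + O(h⁵)`,
and squaring these two expansions gives that of `β₁`.
-/

open Filter Topology Asymptotics

/-- Cell average of `v` over the cell `[x₀+(j-1/2)h, x₀+(j+1/2)h]`. -/
noncomputable def cellAvg (v : ℝ → ℝ) (x₀ h j : ℝ) : ℝ :=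
  (1 / h) * ∫ t in (x₀ + (j - 1 / 2) * h)..(x₀ + (j + 1 / 2) * h), v t

/-- The Jiang–Shu smoothness indicator `β₀`. -/
noncomputable def beta0 (v : ℝ → ℝ) (x₀ h : ℝ) : ℝ :=
  (13 / 12) * (cellAvg v x₀ h (-2) - 2 * cellAvg v x₀ h (-1) + cellAvg v x₀ h 0) ^ 2
    + (1 / 4) * (cellAvg v x₀ h (-2) - 4 * cellAvg v x₀ h (-1) + 3 * cellAvg v x₀ h 0) ^ 2

/-- The Jiang–Shu smoothness indicator `β₁`. -/
noncomputable def beta1 (v : ℝ → ℝ) (x₀ h : ℝ) : ℝ :=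
  (13 / 12) * (cellAvg v x₀ h (-1) - 2 * cellAvg v x₀ h 0 + cellAvg v x₀ h 1) ^ 2
    + (1 / 4) * (cellAvg v x₀ h (-1) - cellAvg v x₀ h 1) ^ 2

/-- The Jiang–Shu smoothness indicator `β₂`. -/
noncomputable def beta2 (v : ℝ → ℝ) (x₀ h : ℝ) : ℝ :=
  (13 / 12) * (cellAvg v x₀ h 0 - 2 * cellAvg v x₀ h 1 + cellAvg v x₀ h 2) ^ 2
    + (1 / 4) * (3 * cellAvg v x₀ h 0 - 4 * cellAvg v x₀ h 1 + cellAvg v x₀ h 2) ^ 2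

open Set Nat in
theorem taylor_isBigO_univ {E : Type*} [NormedAddCommGroup E] [NormedSpace ℝ E] {f : ℝ → E}
    {n : ℕ} (hf : ContDiff ℝ (n + 1) f) (x₀ : ℝ) :
    (fun x => f x - taylorWithinEval f n univ x₀ x) =O[𝓝 x₀] fun x => (x - x₀) ^ (n + 1) := by
  have hsucc := (taylor_isLittleO_univ (n := n + 1) (x₀ := x₀) (by exact_mod_cast hf)).isBigO
  have hterm : (fun x => (((n + 1 : ℝ) * n !)⁻¹ * (x - x₀) ^ (n + 1)) •
      iteratedDerivWithin (n + 1) f univ x₀) =O[𝓝 x₀] fun x => (x - x₀) ^ (n + 1) := by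
    simpa using ((isBigO_refl (fun x : ℝ => (x - x₀) ^ (n + 1)) (𝓝 x₀)).const_mul_left
      ((n + 1 : ℝ) * n !)⁻¹).smul (isBigO_const_one ℝ (iteratedDerivWithin (n + 1) f univ x₀) _)
  refine (hsucc.add hterm).congr_left fun x => ?_
  rw [taylorWithinEval_succ]
  abel

open Nat in
theorem stencil_sub_taylor_isBigO {f : ℝ → ℝ} {n : ℕ} (hf : ContDiff ℝ (n + 1) f) (x₀ : ℝ)
    {ι : Type*} (s : Finset ι) (w c : ι → ℝ) :
    (fun h => ∑ i ∈ s, w i * f (x₀ + c i * h) -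
        ∑ k ∈ Finset.range (n + 1), (∑ i ∈ s, w i * c i ^ k) * iteratedDeriv k f x₀ / k ! * h ^ k)
      =O[𝓝 0] fun h => h ^ (n + 1) := by
  have hnode : ∀ i ∈ s, (fun h => w i * (f (x₀ + c i * h) -
      taylorWithinEval f n Set.univ x₀ (x₀ + c i * h))) =O[𝓝 0] fun h => h ^ (n + 1) := by
    intro i _
    have hlim : Tendsto (fun h : ℝ => x₀ + c i * h) (𝓝 0) (𝓝 x₀) :=
      (show Continuous fun h : ℝ => x₀ + c i * h by fun_prop).tendsto' 0 x₀ (by simp)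
    refine ((taylor_isBigO_univ hf x₀).comp_tendsto hlim).const_mul_left (w i) |>.trans ?_
    simpa [Function.comp_def, mul_pow] using
      (isBigO_refl (fun h : ℝ => h ^ (n + 1)) _).const_mul_left (c i ^ (n + 1))
  refine (IsBigO.sum hnode).congr_left fun h => ?_
  simp only [Finset.sum_apply, taylor_within_apply, iteratedDerivWithin_univ, add_sub_cancel_left,
    smul_eq_mul, mul_sub, Finset.sum_sub_distrib, Finset.mul_sum, Finset.sum_mul]
  rw [Finset.sum_comm (s := s)]
  simp only [Finset.sum_div, Finset.sum_mul]
  congr 1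
  refine Finset.sum_congr rfl fun k _ => Finset.sum_congr rfl fun i _ => ?_
  ring

theorem contDiff_succ_integral {v : ℝ → ℝ} {n : ℕ} (hv : ContDiff ℝ n v) (a : ℝ) :
    ContDiff ℝ (n + 1) fun y => ∫ t in a..y, v t := by
  rw [contDiff_succ_iff_deriv, funext (hv.continuous.deriv_integral v a)]
  exact ⟨fun y => (hv.continuous.integral_hasStrictDerivAt a y).hasDerivAt.differentiableAt,
    by simp, hv⟩

theorem iteratedDeriv_succ_integral {v : ℝ → ℝ} (hv : Continuous v) (a : ℝ) (k : ℕ) :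
    iteratedDeriv (k + 1) (fun y => ∫ t in a..y, v t) = iteratedDeriv k v := by
  rw [iteratedDeriv_succ', funext (hv.deriv_integral v a)]

theorem cellAvg_eq_div {v : ℝ → ℝ} (hv : Continuous v) (x₀ h j : ℝ) :
    cellAvg v x₀ h j = ((∫ t in x₀..x₀ + (j + 1 / 2) * h, v t) -
      ∫ t in x₀..x₀ + (j - 1 / 2) * h, v t) / h := by
  rw [cellAvg, intervalIntegral.integral_interval_sub_left (hv.intervalIntegrable _ _)
    (hv.intervalIntegrable _ _), one_div_mul_eq_div]

theorem isBigO_pow_pow_nhdsNE {k m : ℕ} (hkm : k ≤ m) :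
    (fun h : ℝ => h ^ m) =O[𝓝[≠] 0] fun h => h ^ k := by
  rcases hkm.lt_or_eq with hlt | rfl
  · exact (isLittleO_pow_pow hlt).isBigO.mono nhdsWithin_le_nhds
  · exact isBigO_refl _ _

theorem isBigO_pow_of_mul_isBigO_pow_succ {f : ℝ → ℝ} {n : ℕ}
    (hf : (fun h => h * f h) =O[𝓝[≠] 0] fun h => h ^ (n + 1)) :
    f =O[𝓝[≠] 0] fun h => h ^ n := by
  refine ((isBigO_refl (fun h : ℝ => h⁻¹) _).mul hf).congr' ?_ ?_ <;>
    filter_upwards [self_mem_nhdsWithin] with h (hh : h ≠ 0)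
  · field_simp
  · field_simp; ring

theorem sq_sub_sq_isBigO_pow {f p : ℝ → ℝ} {k m : ℕ} (hkm : k ≤ m)
    (hf : (fun h => f h - p h) =O[𝓝[≠] 0] fun h => h ^ m)
    (hp : p =O[𝓝[≠] 0] fun h => h ^ k) :
    (fun h => f h ^ 2 - p h ^ 2) =O[𝓝[≠] 0] fun h => h ^ (m + k) := by
  have hsum : (fun h => f h + p h) =O[𝓝[≠] 0] fun h => h ^ k :=
    ((hf.trans (isBigO_pow_pow_nhdsNE hkm)).add (hp.const_mul_left 2)).congr_left
      fun h => by ring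
  exact (hf.mul hsum).congr (fun h => by ring) fun h => by ring

theorem cellAvg_secondDiff_isBigO {v : ℝ → ℝ} (hv : ContDiff ℝ 4 v) (x₀ : ℝ) :
    (fun h => cellAvg v x₀ h (-1) - 2 * cellAvg v x₀ h 0 + cellAvg v x₀ h 1 -
        iteratedDeriv 2 v x₀ * h ^ 2) =O[𝓝[≠] 0] fun h => h ^ 4 := by
  apply isBigO_pow_of_mul_isBigO_pow_succ
  have hP := stencil_sub_taylor_isBigO (contDiff_succ_integral (n := 4) hv x₀) x₀
    Finset.univ ![1, -3, 3, -1] ![3 / 2, 1 / 2, -1 / 2, -3 / 2]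
  refine (hP.mono nhdsWithin_le_nhds).congr' ?_ EventuallyEq.rfl
  filter_upwards [self_mem_nhdsWithin] with h (hh : h ≠ 0)
  simp only [cellAvg_eq_div hv.continuous, Fin.sum_univ_four, Matrix.cons_val,
    Finset.sum_range_succ, Finset.sum_range_zero, iteratedDeriv_zero, intervalIntegral.integral_same,
    iteratedDeriv_succ_integral hv.continuous]
  norm_num
  field_simp
  ring

theorem cellAvg_centralDiff_isBigO {v : ℝ → ℝ} (hv : ContDiff ℝ 5 v) (x₀ : ℝ) :
    (fun h => cellAvg v x₀ h (-1) - cellAvg v x₀ h 1 -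
        (-2 * deriv v x₀ * h - 5 / 12 * iteratedDeriv 3 v x₀ * h ^ 3))
      =O[𝓝[≠] 0] fun h => h ^ 5 := by
  apply isBigO_pow_of_mul_isBigO_pow_succ
  have hP := stencil_sub_taylor_isBigO (contDiff_succ_integral (n := 5) hv x₀) x₀
    Finset.univ ![1, 1, -1, -1] ![1 / 2, -1 / 2, 3 / 2, -3 / 2]
  refine (hP.mono nhdsWithin_le_nhds).congr' ?_ EventuallyEq.rfl
  filter_upwards [self_mem_nhdsWithin] with h (hh : h ≠ 0)
  simp only [cellAvg_eq_div hv.continuous, Fin.sum_univ_four, Matrix.cons_val,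
    Finset.sum_range_succ, Finset.sum_range_zero, iteratedDeriv_zero, intervalIntegral.integral_same,
    iteratedDeriv_succ_integral hv.continuous, iteratedDeriv_one]
  norm_num
  field_simp
  ring

theorem beta1_sub_expansion_isBigO {v : ℝ → ℝ} (hv : ContDiff ℝ 5 v) (x₀ : ℝ) :
    (fun h : ℝ => beta1 v x₀ h -
        (deriv v x₀ ^ 2 * h ^ 2 + (13 / 12 * iteratedDeriv 2 v x₀ ^ 2
          + 5 / 12 * deriv v x₀ * iteratedDeriv 3 v x₀) * h ^ 4))
      =O[𝓝[≠] 0] fun h => h ^ 6 := by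
  have hsecond := sq_sub_sq_isBigO_pow (by norm_num)
    (cellAvg_secondDiff_isBigO (hv.of_le (by norm_num)) x₀)
    ((isBigO_refl (fun h : ℝ => h ^ 2) _).const_mul_left (iteratedDeriv 2 v x₀))
  have hcentral := sq_sub_sq_isBigO_pow (by norm_num) (cellAvg_centralDiff_isBigO hv x₀)
    ((((isBigO_refl (fun h : ℝ => h ^ 1) _).const_mul_left (-2 * deriv v x₀)).sub
      ((isBigO_pow_pow_nhdsNE (by norm_num : 1 ≤ 3)).const_mul_left
        (5 / 12 * iteratedDeriv 3 v x₀))).congr_left fun h => by ring)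
  -- the `h⁶` term of `(1/4) (-2 v' h - (5/12) v''' h³)²` lies beyond the stated expansion
  have hsquare := (isBigO_refl (fun h : ℝ => h ^ 6) (𝓝[≠] 0)).const_mul_left
    (25 / 576 * iteratedDeriv 3 v x₀ ^ 2)
  refine (((hsecond.const_mul_left (13 / 12)).add (hcentral.const_mul_left (1 / 4))).add
    hsquare).congr (fun h => ?_) fun h => by ring
  simp only [beta1]
  ring

/-- Taylor expansion of the smoothness indicator `β₁`:
`β₁(h) = v′(x₀)²h² + ((13/12)v″(x₀)² + (5/12)v′(x₀)v‴(x₀))h⁴ + O(h⁶)` as `h → 0⁺`. -/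
theorem stmt13 (v : ℝ → ℝ) (hv : ContDiff ℝ 6 v) (x₀ : ℝ) :
    (fun h : ℝ => beta1 v x₀ h -
        ((deriv v x₀) ^ 2 * h ^ 2
          + ((13 / 12) * (iteratedDeriv 2 v x₀) ^ 2
            + (5 / 12) * deriv v x₀ * iteratedDeriv 3 v x₀) * h ^ 4))
      =O[𝓝[>] (0 : ℝ)] (fun h => h ^ 6) :=
  (beta1_sub_expansion_isBigO (hv.of_le (by norm_num)) x₀).mono
    (nhdsWithin_mono _ fun _ (hh : 0 < _) => hh.ne')
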